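/- Let e be an empirical model with a combinatorial WPS representation e†. Then e is probabilistically contextual if and only if every monotonic extension of e† contains a finite collection of pairwise disjoint sets in the algebra generated by V_M that violates additivity. -/

import Mathlib

/-! By Strong Mutual Exclusivity, Exhaustiveness and gluing, every point `y : Y` lies in
`Ē(s)` for exactly one global section `s = sectionAt y`, and every `Ē(U, t)` is the preimage
under `sectionAt` of the global sections restricting to `t` on `U`.

A global distribution `d` therefore gives the monotonic extension
`A ↦ ∑_{s ∈ sectionAt '' A} d s` on the `sectionAt`-saturated sets, which is additive on all
disjoint families. Conversely, if a monotonic extension `μ'` is additive on disjoint families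
from the algebra generated by `V_M`, then `d s = μ'(Ē(s))` is a global distribution: each `Ē(s)`
is a finite intersection of sets of `V_M`, and `Y` as well as every `Ē(C, t)` is the disjoint
union of the `Ē(s)` it contains. -/

open MeasureTheory


/-- A section (event) over a finite set of measurements `U`: an assignment of an
outcome to each measurement in `U`. -/
abbrev Sec {X : Type*} (U : Finset X) (O : Type*) := {x : X // x ∈ U} → O

/-- Restriction of a section over `V` to a subset `U ⊆ V`. -/
def resSec {X O : Type*} {U V : Finset X} (h : U ⊆ V) (s : Sec V O) : Sec U O :=
  fun x => s ⟨x.1, h x.2⟩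

/-- The section over the singleton `{x}` induced by a section over `U ∋ x`. -/
def singleSec {X O : Type*} {U : Finset X} (x : X) (hx : x ∈ U) (s : Sec U O) :
    Sec ({x} : Finset X) O := fun _ => s ⟨x, hx⟩

/-- Restriction of a global section `s : X → O` to a context `C`. -/
def restrictGlobal {X O : Type*} (s : X → O) (C : Finset X) : Sec C O := fun x => s x.1

/-- Marginalization of the distribution `e C` to a subcontext `U ⊆ C`. -/
def margin {X O : Type*} [Fintype X] [DecidableEq X] [Fintype O] [DecidableEq O]
    (e : (C : Finset X) → Sec C O → ℝ) (C U : Finset X) (hU : U ⊆ C) (s : Sec U O) : ℝ :=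
  ∑ t ∈ Finset.univ.filter (fun t : Sec C O => resSec hU t = s), e C t

/-- An empirical model on the scenario `(X, M, O)`: `M` covers `X`, each `e C` for
`C ∈ M` is a probability distribution on sections over `C`, and the family satisfies
the compatibility (generalized no-signaling) condition. -/
def IsEmpiricalModel {X O : Type*} [Fintype X] [DecidableEq X] [Fintype O] [DecidableEq O]
    (M : Finset (Finset X)) (e : (C : Finset X) → Sec C O → ℝ) : Prop :=
  (∀ x : X, ∃ C ∈ M, x ∈ C) ∧
  (∀ C ∈ M, (∀ t : Sec C O, 0 ≤ e C t) ∧ ∑ t : Sec C O, e C t = 1) ∧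
  (∀ C ∈ M, ∀ C' ∈ M, ∀ t : Sec ((C ∩ C') : Finset X) O,
    margin e C (C ∩ C') Finset.inter_subset_left t
      = margin e C' (C ∩ C') Finset.inter_subset_right t)

/-- A global section consistent with the support of the model. -/
def ConsistentGlobal {X O : Type*} (M : Finset (Finset X))
    (e : (C : Finset X) → Sec C O → ℝ) (s : X → O) : Prop :=
  ∀ C ∈ M, e C (restrictGlobal s C) ≠ 0

/-- Strong contextuality: no global section is consistent with the support. -/
def StronglyContextual {X O : Type*} (M : Finset (Finset X))
    (e : (C : Finset X) → Sec C O → ℝ) : Prop :=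
  ¬ ∃ s : X → O, ConsistentGlobal M e s

/-- Logical contextuality: some section in the support of some `e C` does not extend
to a global section consistent with the support. -/
def LogicallyContextual {X O : Type*} (M : Finset (Finset X))
    (e : (C : Finset X) → Sec C O → ℝ) : Prop :=
  ∃ C ∈ M, ∃ t : Sec C O, e C t ≠ 0 ∧
    ¬ ∃ s : X → O, restrictGlobal s C = t ∧ ConsistentGlobal M e s

/-- Probabilistic contextuality: no global distribution marginalizes to every `e C`. -/
def ProbabilisticallyContextual {X O : Type*} [Fintype X] [DecidableEq X]
    [Fintype O] [DecidableEq O] (M : Finset (Finset X))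
    (e : (C : Finset X) → Sec C O → ℝ) : Prop :=
  ¬ ∃ d : (X → O) → ℝ, (∀ s, 0 ≤ d s) ∧ (∑ s, d s = 1) ∧
    ∀ C ∈ M, ∀ t : Sec C O,
      (∑ s ∈ Finset.univ.filter (fun s : X → O => restrictGlobal s C = t), d s) = e C t




/-- The σ-algebra on `Y` generated by the representations of singleton events over
measurements in a context `C` (for finitely many generators this coincides with the
generated algebra `Σ_C`). -/
def genCtx {X O Y : Type*} (Ebar : (U : Finset X) → Sec U O → Set Y)
    (C : Finset X) : MeasurableSpace Y :=
  MeasurableSpace.generateFrom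
    {S | ∃ x ∈ C, ∃ s : Sec ({x} : Finset X) O, S = Ebar {x} s}

/-- The set `Σ` of WPS events: the union of the algebras `Σ_C` over contexts `C ∈ M`. -/
def SigmaOf {X O Y : Type*} (M : Finset (Finset X))
    (Ebar : (U : Finset X) → Sec U O → Set Y) : Set (Set Y) :=
  {A | ∃ C ∈ M, MeasurableSet[genCtx Ebar C] A}

/-- A WPS representation `e† = (E†, Σ, μ)` of an empirical model `e`: an injective
event transfer map satisfying the gluing condition and nonemptiness, with a set
function `μ` satisfying Weak Classicality (WC), Empirical Consistency (EC) and
Mutual Exclusivity (ME). -/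
structure WPSRep {X O : Type*} [Fintype X] [DecidableEq X] [Fintype O] [DecidableEq O]
    (M : Finset (Finset X)) (e : (C : Finset X) → Sec C O → ℝ) (Y : Type*) where
  Ebar : (U : Finset X) → Sec U O → Set Y
  mu : Set Y → ℝ
  inj : ∀ U : Finset X, Function.Injective (Ebar U)
  glue : ∀ (U : Finset X) (s : Sec U O),
    Ebar U s = ⋂ (x : X), ⋂ (hx : x ∈ U), Ebar {x} (singleSec x hx s)
  nonempty : ∀ (U : Finset X) (s : Sec U O), (Ebar U s).Nonempty
  wc_univ : mu Set.univ = 1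
  wc_nonneg : ∀ C ∈ M, ∀ A : Set Y, MeasurableSet[genCtx Ebar C] A → 0 ≤ mu A
  wc_le_one : ∀ C ∈ M, ∀ A : Set Y, MeasurableSet[genCtx Ebar C] A → mu A ≤ 1
  wc_add : ∀ C ∈ M, ∀ A B : Set Y, MeasurableSet[genCtx Ebar C] A →
    MeasurableSet[genCtx Ebar C] B → Disjoint A B → mu (A ∪ B) = mu A + mu B
  ec : ∀ C ∈ M, ∀ (U : Finset X) (hU : U ⊆ C) (s : Sec U O),
    mu (Ebar U s) = margin e C U hU s
  me : ∀ (U : Finset X) (s s' : Sec U O), s ≠ s' → mu (Ebar U s ∩ Ebar U s') = 0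

/-- A combinatorial WPS representation: additionally satisfies Strong Mutual
Exclusivity and Exhaustiveness. -/
structure ComboWPSRep {X O : Type*} [Fintype X] [DecidableEq X] [Fintype O] [DecidableEq O]
    (M : Finset (Finset X)) (e : (C : Finset X) → Sec C O → ℝ) (Y : Type*)
    extends WPSRep M e Y where
  sme : ∀ (U : Finset X) (s s' : Sec U O), s ≠ s' → Ebar U s ∩ Ebar U s' = ∅
  exh : ∀ U : Finset X, (⋃ s : Sec U O, Ebar U s) = Set.univ

/-- The collection `V_M` of representations of events over maximal contexts. -/
def VMSet {X O Y : Type*} (M : Finset (Finset X))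
    (Ebar : (U : Finset X) → Sec U O → Set Y) : Set (Set Y) :=
  {A | ∃ C ∈ M, ∃ s : Sec C O, A = Ebar C s}

/-- A monotonic extension `(Y, Σ', μ')` of a WPS `(Y, Σ, μ)`: `Σ'` contains the
algebra generated by `Σ`, `μ'` restricts to `μ` on `Σ`, is monotone, and takes
values in `[0,1]`. -/
structure MonExt {Y : Type*} (Sigma : Set (Set Y)) (mu : Set Y → ℝ)
    (Sigma' : Set (Set Y)) (mu' : Set Y → ℝ) : Prop where
  sub : Sigma ⊆ Sigma'
  univ_mem : Set.univ ∈ Sigma'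
  compl_mem : ∀ A ∈ Sigma', Aᶜ ∈ Sigma'
  union_mem : ∀ A ∈ Sigma', ∀ B ∈ Sigma', A ∪ B ∈ Sigma'
  restricts : ∀ A ∈ Sigma, mu' A = mu A
  mono : ∀ A ∈ Sigma', ∀ B ∈ Sigma', A ⊆ B → mu' A ≤ mu' B
  nonneg : ∀ A ∈ Sigma', 0 ≤ mu' A
  le_one : ∀ A ∈ Sigma', mu' A ≤ 1


lemma margin_self {X O : Type*} [Fintype X] [DecidableEq X] [Fintype O] [DecidableEq O]
    (e : (C : Finset X) → Sec C O → ℝ) (C : Finset X) (t : Sec C O) :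
    margin e C C subset_rfl t = e C t := by
  have hfilter : Finset.univ.filter (fun t' : Sec C O => resSec subset_rfl t' = t) = {t} := by
    ext t'
    simp [show resSec subset_rfl t' = t' from rfl]
  rw [margin, hfilter, Finset.sum_singleton]

lemma MonExt.isSetAlgebra {Y : Type*} {Sigma Sigma' : Set (Set Y)} {mu mu' : Set Y → ℝ}
    (h : MonExt Sigma mu Sigma' mu') : IsSetAlgebra Sigma' where
  empty_mem := Set.compl_univ ▸ h.compl_mem _ h.univ_mem
  compl_mem A hA := h.compl_mem A hA
  union_mem A B hA hB := h.union_mem A hA B hB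

section imageWeight

variable {Y α : Type*} {π : Y → α}

lemma disjoint_image_of_measurableSet_comap {A B : Set Y}
    (hA : MeasurableSet[MeasurableSpace.comap π ⊤] A) (hAB : Disjoint A B) :
    Disjoint (π '' A) (π '' B) := by
  obtain ⟨S, -, rfl⟩ := hA
  rw [Set.disjoint_left]
  rintro _ ⟨y, hy, rfl⟩ ⟨z, hz, hzy⟩
  exact Set.disjoint_left.1 hAB (show π z ∈ S from hzy ▸ hy) hz

variable [Fintype α]

noncomputable def imageWeight (π : Y → α) (d : α → ℝ) (A : Set Y) : ℝ :=
  ∑ a, (π '' A).indicator d a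

variable {d : α → ℝ}

lemma imageWeight_preimage (hπ : Function.Surjective π) (S : Set α) :
    imageWeight π d (π ⁻¹' S) = ∑ a, S.indicator d a := by
  rw [imageWeight, hπ.image_preimage]

lemma imageWeight_biUnion {ι : Type*} (F : Finset ι) {f : ι → Set Y}
    (hf : ∀ i ∈ F, MeasurableSet[MeasurableSpace.comap π ⊤] (f i))
    (hdisj : (F : Set ι).PairwiseDisjoint f) :
    imageWeight π d (⋃ i ∈ F, f i) = ∑ i ∈ F, imageWeight π d (f i) := by
  have hdisj' : (F : Set ι).PairwiseDisjoint (fun i => π '' f i) := fun i hi j hj hij =>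
    disjoint_image_of_measurableSet_comap (hf i hi) (hdisj hi hj hij)
  simp only [imageWeight, Set.image_iUnion₂, Finset.indicator_biUnion_apply F _ hdisj']
  exact Finset.sum_comm

lemma monExt_imageWeight {Sigma : Set (Set Y)} {mu : Set Y → ℝ}
    (hd0 : ∀ a, 0 ≤ d a) (hd1 : ∑ a, d a = 1)
    (hSigma : ∀ A ∈ Sigma, MeasurableSet[MeasurableSpace.comap π ⊤] A)
    (hmu : ∀ A ∈ Sigma, mu A = imageWeight π d A) :
    MonExt Sigma mu {A | MeasurableSet[MeasurableSpace.comap π ⊤] A} (imageWeight π d) where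
  sub := hSigma
  univ_mem := MeasurableSet.univ (m := .comap π ⊤)
  compl_mem _ hA := MeasurableSet.compl (m := .comap π ⊤) hA
  union_mem _ hA _ hB := MeasurableSet.union (m := .comap π ⊤) hA hB
  restricts A hA := (hmu A hA).symm
  mono _ _ _ _ hAB := Finset.sum_le_sum fun a _ =>
    Set.indicator_le_indicator_of_subset (Set.image_mono hAB) hd0 a
  nonneg _ _ := Finset.sum_nonneg fun a _ => Set.indicator_nonneg (fun a _ => hd0 a) a
  le_one _ _ := hd1 ▸ Finset.sum_le_sum fun a _ => Set.indicator_le_self' (fun a _ => hd0 a) a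

end imageWeight

def AdditiveOnDisjointFamilies {Y : Type*} (𝒜 Sigma' : Set (Set Y)) (mu' : Set Y → ℝ) : Prop :=
  ∀ V : Finset (Set Y),
    (∀ A ∈ V, MeasurableSet[MeasurableSpace.generateFrom 𝒜] A) →
    ↑V ⊆ Sigma' →
    (∀ A ∈ V, ∀ B ∈ V, A ≠ B → Disjoint A B) →
    ⋃₀ (V : Set (Set Y)) ∈ Sigma' →
    mu' (⋃₀ (V : Set (Set Y))) = ∑ A ∈ V, mu' A

namespace WPSRep

variable {X O Y : Type*} [Fintype X] [DecidableEq X] [Fintype O] [DecidableEq O]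
  {M : Finset (Finset X)} {e : (C : Finset X) → Sec C O → ℝ} (W : WPSRep M e Y)

lemma measurableSet_Ebar (C : Finset X) (t : Sec C O) :
    MeasurableSet[genCtx W.Ebar C] (W.Ebar C t) := by
  rw [W.glue]
  exact MeasurableSet.iInter fun x => MeasurableSet.iInter fun hx =>
    MeasurableSpace.measurableSet_generateFrom ⟨x, hx, singleSec x hx t, rfl⟩

lemma Ebar_mem_SigmaOf {C : Finset X} (hC : C ∈ M) (t : Sec C O) :
    W.Ebar C t ∈ SigmaOf M W.Ebar :=
  ⟨C, hC, W.measurableSet_Ebar C t⟩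

lemma mu_Ebar {C : Finset X} (hC : C ∈ M) (t : Sec C O) : W.mu (W.Ebar C t) = e C t := by
  rw [W.ec C hC C subset_rfl t, margin_self]

lemma mu_empty {C : Finset X} (hC : C ∈ M) : W.mu ∅ = 0 := by
  have h := W.wc_add C hC ∅ ∅ (MeasurableSpace.measurableSet_empty _)
    (MeasurableSpace.measurableSet_empty _) (Set.disjoint_empty _)
  rw [Set.empty_union] at h
  linarith

lemma mu_biUnion {C : Finset X} (hC : C ∈ M) {ι : Type*} (F : Finset ι) {f : ι → Set Y}
    (hf : ∀ i ∈ F, MeasurableSet[genCtx W.Ebar C] (f i))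
    (hdisj : (F : Set ι).PairwiseDisjoint f) :
    W.mu (⋃ i ∈ F, f i) = ∑ i ∈ F, W.mu (f i) := by
  classical
  induction F using Finset.induction_on with
  | empty => simpa using W.mu_empty hC
  | insert i F hi ih =>
    rw [Finset.coe_insert, Set.pairwiseDisjoint_insert_of_notMem (Finset.mem_coe.not.2 hi)]
      at hdisj
    have hfF : ∀ j ∈ F, MeasurableSet[genCtx W.Ebar C] (f j) := fun j hj =>
      hf j (Finset.mem_insert_of_mem hj)
    rw [Finset.set_biUnion_insert, Finset.sum_insert hi, ← ih hfF hdisj.1]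
    exact W.wc_add C hC _ _ (hf i (Finset.mem_insert_self i F))
      (Finset.measurableSet_biUnion F hfF) (Set.disjoint_iUnion₂_right.2 hdisj.2)

end WPSRep

namespace ComboWPSRep

variable {X O Y : Type*} [Fintype X] [DecidableEq X] [Fintype O] [DecidableEq O]
  {M : Finset (Finset X)} {e : (C : Finset X) → Sec C O → ℝ} (W : ComboWPSRep M e Y)

lemma exists_mem_Ebar_univ (y : Y) : ∃ t : Sec Finset.univ O, y ∈ W.Ebar Finset.univ t :=
  Set.mem_iUnion.1 (W.exh Finset.univ ▸ Set.mem_univ y)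

noncomputable def sectionAt (y : Y) : X → O :=
  fun x => (W.exists_mem_Ebar_univ y).choose ⟨x, Finset.mem_univ x⟩

lemma mem_Ebar_singleton_iff {y : Y} {x : X} {a : Sec ({x} : Finset X) O} :
    y ∈ W.Ebar {x} a ↔ (fun _ => W.sectionAt y x) = a := by
  have hy : y ∈ W.Ebar {x} (fun _ => W.sectionAt y x) := by
    have h := (W.exists_mem_Ebar_univ y).choose_spec
    rw [W.glue] at h
    exact Set.mem_iInter₂.1 h x (Finset.mem_univ x)
  refine ⟨fun ha => ?_, fun ha => ha ▸ hy⟩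
  by_contra hne
  simpa [W.sme _ _ _ hne] using Set.mem_inter hy ha

lemma mem_Ebar_iff {y : Y} {U : Finset X} {t : Sec U O} :
    y ∈ W.Ebar U t ↔ restrictGlobal (W.sectionAt y) U = t := by
  rw [W.glue, Set.mem_iInter₂]
  simp [mem_Ebar_singleton_iff, funext_iff, singleSec, restrictGlobal]

lemma sectionAt_surjective : Function.Surjective W.sectionAt := fun s => by
  obtain ⟨y, hy⟩ := W.nonempty Finset.univ (restrictGlobal s Finset.univ)
  exact ⟨y, funext fun x => congrFun (W.mem_Ebar_iff.1 hy) ⟨x, Finset.mem_univ x⟩⟩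

lemma Ebar_eq_preimage (U : Finset X) (t : Sec U O) :
    W.Ebar U t = W.sectionAt ⁻¹' {s | restrictGlobal s U = t} :=
  Set.ext fun _ => W.mem_Ebar_iff

lemma measurableSet_comap_Ebar (U : Finset X) (t : Sec U O) :
    MeasurableSet[MeasurableSpace.comap W.sectionAt ⊤] (W.Ebar U t) :=
  ⟨_, trivial, (W.Ebar_eq_preimage U t).symm⟩

lemma genCtx_le_comap (C : Finset X) :
    genCtx W.Ebar C ≤ MeasurableSpace.comap (fun y => restrictGlobal (W.sectionAt y) C) ⊤ := by
  refine MeasurableSpace.generateFrom_le ?_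
  rintro _ ⟨x, hx, a, rfl⟩
  exact ⟨{t | singleSec x hx t = a}, trivial, Set.ext fun _ => W.mem_Ebar_singleton_iff.symm⟩

lemma measurableSet_comap_of_mem_SigmaOf {A : Set Y} (hA : A ∈ SigmaOf M W.Ebar) :
    MeasurableSet[MeasurableSpace.comap W.sectionAt ⊤] A := by
  obtain ⟨C, -, hA⟩ := hA
  obtain ⟨T, -, rfl⟩ := W.genCtx_le_comap C A hA
  exact ⟨{s | restrictGlobal s C ∈ T}, trivial, rfl⟩

lemma imageWeight_Ebar (d : (X → O) → ℝ) (C : Finset X) (t : Sec C O) :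
    imageWeight W.sectionAt d (W.Ebar C t)
      = ∑ s ∈ Finset.univ.filter (fun s : X → O => restrictGlobal s C = t), d s := by
  classical
  rw [W.Ebar_eq_preimage, imageWeight_preimage W.sectionAt_surjective,
    Finset.sum_indicator_eq_sum_filter]
  rfl

section

variable {d : (X → O) → ℝ}
  (hmarg : ∀ C ∈ M, ∀ t : Sec C O,
    (∑ s ∈ Finset.univ.filter (fun s : X → O => restrictGlobal s C = t), d s) = e C t)
include hmarg

lemma mu_eq_imageWeight {C : Finset X} (hC : C ∈ M) {A : Set Y}
    (hA : MeasurableSet[genCtx W.Ebar C] A) : W.mu A = imageWeight W.sectionAt d A := by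
  classical
  obtain ⟨T, -, rfl⟩ := W.genCtx_le_comap C A hA
  have hdisj : (↑(Finset.univ.filter (· ∈ T)) : Set (Sec C O)).PairwiseDisjoint (W.Ebar C) :=
    fun t _ t' _ hne => Set.disjoint_iff_inter_eq_empty.2 (W.sme C t t' hne)
  have hunion : (fun y => restrictGlobal (W.sectionAt y) C) ⁻¹' T
      = ⋃ t ∈ Finset.univ.filter (· ∈ T), W.Ebar C t := by
    ext y
    simp [W.mem_Ebar_iff]
  rw [hunion, W.mu_biUnion hC _ (fun t _ => W.measurableSet_Ebar C t) hdisj,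
    imageWeight_biUnion _ (fun t _ => W.measurableSet_comap_Ebar C t) hdisj]
  refine Finset.sum_congr rfl fun t _ => ?_
  rw [W.mu_Ebar hC, imageWeight_Ebar, hmarg C hC t]

lemma monExt_imageWeight_sectionAt (hd0 : ∀ s, 0 ≤ d s) (hd1 : ∑ s, d s = 1) :
    MonExt (SigmaOf M W.Ebar) W.mu
      {A | MeasurableSet[MeasurableSpace.comap W.sectionAt ⊤] A} (imageWeight W.sectionAt d) :=
  monExt_imageWeight hd0 hd1 (fun _ => W.measurableSet_comap_of_mem_SigmaOf)
    fun _ ⟨_, hC, hA⟩ => W.mu_eq_imageWeight hmarg hC hA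

end

lemma preimage_singleton_eq_biInter (hcov : ∀ x : X, ∃ C ∈ M, x ∈ C) (s : X → O) :
    W.sectionAt ⁻¹' {s} = ⋂ C ∈ M, W.Ebar C (restrictGlobal s C) := by
  ext y
  simp only [Set.mem_preimage, Set.mem_singleton_iff, Set.mem_iInter₂, mem_Ebar_iff]
  refine ⟨fun h C _ => h ▸ rfl, fun h => funext fun x => ?_⟩
  obtain ⟨C, hC, hx⟩ := hcov x
  exact congrFun (h C hC) ⟨x, hx⟩

variable {Sigma' : Set (Set Y)} {mu' : Set Y → ℝ}
  (hcov : ∀ x : X, ∃ C ∈ M, x ∈ C) (hext : MonExt (SigmaOf M W.Ebar) W.mu Sigma' mu')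
include hcov hext

lemma preimage_singleton_mem (s : X → O) : W.sectionAt ⁻¹' {s} ∈ Sigma' := by
  rw [W.preimage_singleton_eq_biInter hcov]
  exact hext.isSetAlgebra.biInter_mem M fun C hC => hext.sub (W.Ebar_mem_SigmaOf hC _)

omit hext in
lemma measurableSet_generateFrom_VMSet_preimage_singleton (s : X → O) :
    MeasurableSet[MeasurableSpace.generateFrom (VMSet M W.Ebar)] (W.sectionAt ⁻¹' {s}) := by
  rw [W.preimage_singleton_eq_biInter hcov]
  exact Finset.measurableSet_biInter M fun C hC =>
    MeasurableSpace.measurableSet_generateFrom ⟨C, hC, _, rfl⟩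

lemma apply_preimage_eq_sum (hadd : AdditiveOnDisjointFamilies (VMSet M W.Ebar) Sigma' mu')
    (S : Finset (X → O)) (hS : W.sectionAt ⁻¹' ↑S ∈ Sigma') :
    mu' (W.sectionAt ⁻¹' ↑S) = ∑ s ∈ S, mu' (W.sectionAt ⁻¹' {s}) := by
  classical
  have hinj : Function.Injective fun s : X → O => W.sectionAt ⁻¹' {s} :=
    W.sectionAt_surjective.preimage_injective.comp Set.singleton_injective
  have hunion : ⋃₀ ↑(S.image fun s => W.sectionAt ⁻¹' {s}) = W.sectionAt ⁻¹' ↑S := by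
    rw [Finset.coe_image, Set.sUnion_image, ← Set.preimage_iUnion₂, Set.biUnion_of_singleton]
  have h := hadd (S.image fun s => W.sectionAt ⁻¹' {s})
    (by simpa using fun s _ => W.measurableSet_generateFrom_VMSet_preimage_singleton hcov s)
    (by simpa [Set.subset_def] using fun s _ => W.preimage_singleton_mem hcov hext s)
    (by
      simp only [Finset.mem_image]
      rintro _ ⟨s, -, rfl⟩ _ ⟨s', -, rfl⟩ hne
      exact (Set.disjoint_singleton.2 fun h : s = s' => hne (by rw [h])).preimage W.sectionAt)
    (hunion ▸ hS)
  rwa [hunion, Finset.sum_image hinj.injOn] at h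

lemma exists_global_dist (hadd : AdditiveOnDisjointFamilies (VMSet M W.Ebar) Sigma' mu') :
    ∃ d : (X → O) → ℝ, (∀ s, 0 ≤ d s) ∧ (∑ s, d s = 1) ∧
      ∀ C ∈ M, ∀ t : Sec C O,
        (∑ s ∈ Finset.univ.filter (fun s : X → O => restrictGlobal s C = t), d s) = e C t := by
  classical
  obtain rfl | ⟨C₀, hC₀⟩ := M.eq_empty_or_nonempty
  · -- only a context forces `mu' univ = 1`; without one, `X` is empty
    have : IsEmpty X := ⟨fun x => by simpa using hcov x⟩
    exact ⟨fun _ => 1, fun _ => zero_le_one, by simp, by simp⟩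
  refine ⟨fun s => mu' (W.sectionAt ⁻¹' {s}),
    fun s => hext.nonneg _ (W.preimage_singleton_mem hcov hext s), ?_, fun C hC t => ?_⟩
  · have h := W.apply_preimage_eq_sum hcov hext hadd Finset.univ (by simpa using hext.univ_mem)
    rw [Finset.coe_univ, Set.preimage_univ, hext.restricts _ ⟨C₀, hC₀, MeasurableSet.univ⟩,
      W.wc_univ] at h
    exact h.symm
  · have hS : W.sectionAt ⁻¹' ↑(Finset.univ.filter fun s : X → O => restrictGlobal s C = t)
        = W.Ebar C t := by
      ext y
      simp [W.mem_Ebar_iff]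
    have hmem := W.Ebar_mem_SigmaOf hC t
    have h := W.apply_preimage_eq_sum hcov hext hadd _ (hS ▸ hext.sub hmem)
    rw [hS, hext.restricts _ hmem, W.mu_Ebar hC] at h
    exact h.symm

end ComboWPSRep

/-- **Proposition 1.3.** For any combinatorial WPS representation `e†` of an
empirical model `e`: `e` is probabilistically contextual if and only if every
monotonic extension `(Y, Σ', μ')` of `e†` contains a finite collection of pairwise
disjoint sets belonging to the algebra generated by `V_M` (which, `V_M` being
finite, is its generated σ-algebra) that violates additivity. -/
theorem probabilistically_contextual_iff_extensions_violate_additivity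
    {X O Y : Type*} [Fintype X] [DecidableEq X] [Fintype O] [DecidableEq O]
    (M : Finset (Finset X)) (e : (C : Finset X) → Sec C O → ℝ)
    (hmodel : IsEmpiricalModel M e)
    (W : ComboWPSRep M e Y) :
    ProbabilisticallyContextual M e ↔
      ∀ (Sigma' : Set (Set Y)) (mu' : Set Y → ℝ),
        MonExt (SigmaOf M W.Ebar) W.mu Sigma' mu' →
        ∃ V : Finset (Set Y),
          (∀ A ∈ V, MeasurableSet[MeasurableSpace.generateFrom (VMSet M W.Ebar)] A) ∧
          ↑V ⊆ Sigma' ∧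
          (∀ A ∈ V, ∀ B ∈ V, A ≠ B → Disjoint A B) ∧
          ⋃₀ (V : Set (Set Y)) ∈ Sigma' ∧
          mu' (⋃₀ (V : Set (Set Y))) ≠ ∑ A ∈ V, mu' A := by
  constructor
  · intro hPC Sigma' mu' hext
    by_contra! hadd
    exact hPC (W.exists_global_dist hmodel.1 hext hadd)
  · rintro hviol ⟨d, hd0, hd1, hmarg⟩
    obtain ⟨V, -, hVsub, hdisj, -, hne⟩ :=
      hviol _ _ (W.monExt_imageWeight_sectionAt hmarg hd0 hd1)
    rw [Set.sUnion_eq_biUnion] at hne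
    exact hne (imageWeight_biUnion V (fun A hA => hVsub hA) fun A hA B hB => hdisj A hA B hB)
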